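/- arXiv:1112.4535 — 3 statements merged into one kernel-verified Lean document; each statement's English description precedes it below -/
import Mathlib

section
/- Let R be a (possibly noncommutative) ring and let q₁,…,qₙ be elements of R with n ≥ 1. Then the following Bézout identity holds: [−q_{n−1}, −q_{n−2}, …, −q₁, 0] · [q₁,…,qₙ] + [−q_{n−1}, −q_{n−2}, …, −q₁] · [q₂,…,qₙ] = 1. In particular, the continuants [q₁,…,qₙ] and [q₁,…,q_{n−1}] generate the unit ideal (they are coprime). -/
/-- Auxiliary function: the continuant computed on the *reversed* sequence,
implementing the recurrence `[q₁,…,qₙ] = [q₁,…,q_{n−1}]·qₙ + [q₁,…,q_{n−2}]`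
together with `[] = 1` and `[q₁] = q₁`. -/
def contAux {R : Type*} [Ring R] : List R → R
  | [] => 1
  | [a] => a
  | a :: b :: l => contAux (b :: l) * a + contAux l

/-- The continuant `[q₁,…,qₙ]` of the finite sequence `q₁,…,qₙ`. -/
def continuant {R : Type*} [Ring R] (l : List R) : R :=
  contAux l.reverse

theorem contAux_pair {R : Type*} [Ring R] (b a : R) :
    ∀ m : List R, contAux (m ++ [b, a]) = a * contAux (m ++ [b]) + contAux m
  | [] => by simp [contAux]
  | [c] => by simp [contAux]; noncomm_ring
  | c :: d :: m => by
    have h1 := contAux_pair b a (d :: m)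
    have h2 := contAux_pair b a m
    simp only [List.cons_append, List.append_eq, contAux] at *
    rw [h1, h2]; noncomm_ring

theorem continuant_cons_cons {R : Type*} [Ring R] (a b : R) (l : List R) :
    continuant (a :: b :: l) = a * continuant (b :: l) + continuant l := by
  simp only [continuant, List.reverse_cons, List.append_assoc, List.singleton_append]
  rw [contAux_pair]

theorem contAux_cons_zero {R : Type*} [Ring R] (a : R) (Y : List R) :
    contAux (a :: Y) = contAux Y * a + contAux (0 :: Y) := by
  cases Y with
  | nil => simp [contAux]
  | cons x X => simp [contAux]

theorem bez {R : Type*} [Ring R] :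
    ∀ s : List R, s ≠ [] →
      contAux (0 :: s.dropLast.map (fun x => -x)) * continuant s +
        contAux (s.dropLast.map (fun x => -x)) * continuant s.tail = 1
  | [], h => absurd rfl h
  | [a], _ => by simp [contAux, continuant]
  | a :: b :: t, _ => by
    have ih := bez (b :: t) (by simp)
    have hd : (a :: b :: t).dropLast = a :: (b :: t).dropLast := by simp
    rw [hd, List.tail_cons, List.map_cons, continuant_cons_cons]
    set Y := ((b :: t).dropLast).map (fun x : R => -x) with hY
    have h0 : contAux ((0 : R) :: -a :: Y) = contAux Y := by
      cases Y with
      | nil => simp [contAux]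
      | cons x X => simp [contAux]
    rw [h0, contAux_cons_zero]
    set A := contAux ((0 : R) :: Y)
    set X := contAux Y
    set C := continuant (b :: t)
    set T := continuant t
    have ht : continuant (b :: t).tail = T := by
      cases t with
      | nil => rfl
      | cons c u => rfl
    rw [ht] at ih
    have key : X * (a * C + T) + (X * -a + A) * C = A * C + X * T := by noncomm_ring
    rw [key, ih]

theorem contAux_map_op {R : Type*} [Ring R] :
    ∀ m : List R, contAux (m.map MulOpposite.op) = MulOpposite.op (continuant m)
  | [] => by simp [contAux, continuant]
  | [a] => by simp [contAux, continuant]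
  | a :: b :: l => by
    have h1 := contAux_map_op (b :: l)
    have h2 := contAux_map_op l
    simp only [List.map_cons, contAux] at h1 h2 ⊢
    rw [h1, h2, continuant_cons_cons]
    simp [MulOpposite.op_mul, MulOpposite.op_add]


/-- **Bézout identity for continuants.** In any (possibly noncommutative) ring, for `n ≥ 1`,
`[−q_{n−1},…,−q₁,0]·[q₁,…,qₙ] + [−q_{n−1},…,−q₁]·[q₂,…,qₙ] = 1`;
in particular the continuants `[q₁,…,qₙ]` and `[q₁,…,q_{n−1}]` generate the unit ideal. -/
theorem continuant_bezout {R : Type*} [Ring R] (n : ℕ) (hn : 1 ≤ n) (q : Fin n → R) :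
    continuant ((((List.ofFn q).take (n - 1)).map (fun x => -x)).reverse ++ [0]) *
          continuant (List.ofFn q) +
        continuant ((((List.ofFn q).take (n - 1)).map (fun x => -x)).reverse) *
          continuant ((List.ofFn q).drop 1) = 1 ∧
      ∃ a b : R,
        continuant (List.ofFn q) * a + continuant ((List.ofFn q).dropLast) * b = 1 := by
  set s := List.ofFn q with hs
  have hlen : s.length = n := by simp [hs]
  have hne : s ≠ [] := by
    intro h; rw [h] at hlen; simp at hlen; omega
  have htake : s.take (n - 1) = s.dropLast := by
    rw [List.dropLast_eq_take, hlen]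
  constructor
  · have h := bez s hne
    rw [htake]
    have e1 : continuant (((s.dropLast.map fun x => -x)).reverse ++ [0]) =
        contAux (0 :: s.dropLast.map fun x => -x) := by
      simp [continuant]
    have e2 : continuant ((s.dropLast.map fun x => -x).reverse) =
        contAux (s.dropLast.map fun x => -x) := by
      simp [continuant]
    rw [e1, e2, List.drop_one]
    exact h
  · have h := bez (R := Rᵐᵒᵖ) ((s.reverse).map MulOpposite.op) (by simp [hne])
    set u := (s.reverse).map MulOpposite.op with hu
    have hcu : continuant u = MulOpposite.op (continuant s) := by
      rw [continuant, hu, ← List.map_reverse, List.reverse_reverse]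
      exact contAux_map_op s
    have hgl := List.dropLast_append_getLast hne
    have hct : continuant u.tail = MulOpposite.op (continuant s.dropLast) := by
      have ht : u.tail = (s.dropLast.reverse).map MulOpposite.op := by
        conv_lhs => rw [hu, ← hgl]
        simp
      rw [continuant, ht, ← List.map_reverse, List.reverse_reverse]
      exact contAux_map_op _
    rw [hcu, hct] at h
    refine ⟨(contAux (0 :: u.dropLast.map fun x => -x)).unop,
      (contAux (u.dropLast.map fun x => -x)).unop, ?_⟩
    have h2 := congrArg MulOpposite.unop h
    simpa using h2
end

section
/- Let R be a commutative ring and let (q₁,…,qₙ) be a palindromic sequence (q_i = q_{n+1−i} for 1 ≤ i ≤ n) of even length n = 2s. Then [q₁,…,q_s,q_s,…,q₂]² + 1 = [q₁,…,q_s,q_s,…,q₁]·[q₂,…,q_s,q_s,…,q₂] = ([q₁,…,q_s]² + [q₁,…,q_{s−1}]²)·([q₂,…,q_s]² + [q₂,…,q_{s−1}]²). -/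
/-!
Continuants are the entries of products of the symmetric matrices `!![a, 1; 1, 0]`:
for `n ≥ 2` the product over `q₁,…,qₙ` is `!![[q₁…qₙ], [q₁…qₙ₋₁]; [q₂…qₙ], [q₂…qₙ₋₁]]`.
Reversing a sequence transposes the product, so for the palindrome `u ++ u.reverse` the product
is `M Mᵀ` with `M` the product over `u`, whose top-left entry is `[u]² + [u minus its last term]²`.
The first identity is the determinant `(-1)ⁿ = 1` of the product, combined with
`[q₂…qₙ] = [q₁…qₙ₋₁]` for palindromes.
-/

open Matrix

namespace List

theorem reverse_ofFn_eq_self {α : Type*} {n : ℕ} {f : Fin n → α} (hf : ∀ i, f i = f i.rev) :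
    (ofFn f).reverse = ofFn f := by
  refine ext_getElem (by simp) fun i _ h => ?_
  simp only [getElem_reverse, List.getElem_ofFn, length_ofFn]
  rw [hf]
  congr
  simp only [length_ofFn] at h
  ext
  simp only [Fin.val_rev]
  omega

theorem tail_dropLast_append_reverse {α : Type*} {u : List α} (hu : u ≠ []) :
    (u ++ u.reverse).tail.dropLast = u.tail ++ u.tail.reverse := by
  rw [tail_append_of_ne_nil hu, dropLast_append_of_ne_nil (reverse_ne_nil_iff.mpr hu),
    dropLast_reverse]

theorem eq_take_append_reverse_take {α : Type*} {l : List α} {s : ℕ} (hl : l.reverse = l)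
    (hlen : l.length = 2 * s) : l = l.take s ++ (l.take s).reverse := by
  conv_lhs => rw [← take_append_drop s l]
  rw [reverse_take, hl, hlen]
  congr 2
  omega

end List

section Ring

variable {R : Type*} [Ring R]

@[simp]
theorem continuant_nil : continuant ([] : List R) = 1 := rfl

@[simp]
theorem continuant_singleton (a : R) : continuant [a] = a := rfl

theorem continuant_append_pair (l : List R) (b a : R) :
    continuant (l ++ [b, a]) = continuant (l ++ [b]) * a + continuant l := by
  simp [continuant, contAux]

def continuantMatrix (l : List R) : Matrix (Fin 2) (Fin 2) R :=
  (l.map fun a => !![a, 1; 1, 0]).prod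

@[simp]
theorem continuantMatrix_nil : continuantMatrix ([] : List R) = 1 := rfl

theorem continuantMatrix_append (l₁ l₂ : List R) :
    continuantMatrix (l₁ ++ l₂) = continuantMatrix l₁ * continuantMatrix l₂ := by
  simp [continuantMatrix]

@[simp]
theorem continuantMatrix_singleton (a : R) : continuantMatrix [a] = !![a, 1; 1, 0] := by
  simp [continuantMatrix]

theorem continuantMatrix_cons (a : R) (l : List R) :
    continuantMatrix (a :: l) = !![a, 1; 1, 0] * continuantMatrix l := by
  simp [continuantMatrix]

theorem continuantMatrix_cons_append_singleton (a : R) (l : List R) (b : R) :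
    continuantMatrix (a :: l ++ [b]) =
      !![continuant (a :: l ++ [b]), continuant (a :: l); continuant (l ++ [b]), continuant l] := by
  induction l using List.reverseRecOn generalizing b with
  | nil => simp [continuantMatrix, continuant, contAux]
  | append_singleton l c ih =>
    rw [continuantMatrix_append, ← List.cons_append, ih, continuantMatrix_singleton, mul_fin_two]
    simp only [List.append_assoc, List.singleton_append, continuant_append_pair]
    simp

theorem continuantMatrix_of_two_le_length {l : List R} (hl : 2 ≤ l.length) :
    continuantMatrix l = !![continuant l, continuant l.dropLast;
      continuant l.tail, continuant l.tail.dropLast] := by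
  obtain ⟨a, m, b, rfl⟩ : ∃ a m b, l = a :: m ++ [b] := by
    match l with
    | a :: b :: t => exact ⟨a, (b :: t).dropLast, (b :: t).getLast (List.cons_ne_nil b t),
        by rw [List.cons_append, List.dropLast_append_getLast]⟩
  rw [continuantMatrix_cons_append_singleton, List.dropLast_concat]
  simp

theorem continuantMatrix_apply_zero_zero (l : List R) : continuantMatrix l 0 0 = continuant l :=
  match l with
  | [] => rfl
  | [a] => by simp
  | a :: b :: t => by simp [continuantMatrix_of_two_le_length]

theorem continuantMatrix_apply_zero_one {l : List R} (hl : l ≠ []) :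
    continuantMatrix l 0 1 = continuant l.dropLast :=
  match l with
  | [a] => by simp
  | a :: b :: t => by simp [continuantMatrix_of_two_le_length]

theorem continuantMatrix_apply_one_zero {l : List R} (hl : l ≠ []) :
    continuantMatrix l 1 0 = continuant l.tail :=
  match l with
  | [a] => by simp
  | a :: b :: t => by simp [continuantMatrix_of_two_le_length]

theorem continuant_append {u v : List R} (hu : u ≠ []) (hv : v ≠ []) :
    continuant (u ++ v) =
      continuant u * continuant v + continuant u.dropLast * continuant v.tail := by
  rw [← continuantMatrix_apply_zero_zero, continuantMatrix_append, mul_apply, Fin.sum_univ_two,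
    continuantMatrix_apply_zero_zero, continuantMatrix_apply_zero_zero,
    continuantMatrix_apply_zero_one hu, continuantMatrix_apply_one_zero hv]

end Ring

section CommRing

variable {R : Type*} [CommRing R]

theorem continuantMatrix_reverse (l : List R) :
    continuantMatrix l.reverse = (continuantMatrix l)ᵀ := by
  induction l with
  | nil => simp
  | cons a l ih =>
    rw [List.reverse_cons, continuantMatrix_append, continuantMatrix_singleton, ih,
      continuantMatrix_cons, transpose_mul]
    congr 1
    ext i j
    fin_cases i <;> fin_cases j <;> rfl

@[simp]
theorem continuant_reverse (l : List R) : continuant l.reverse = continuant l := by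
  rw [← continuantMatrix_apply_zero_zero, continuantMatrix_reverse, transpose_apply,
    continuantMatrix_apply_zero_zero]

theorem continuant_append_reverse {u : List R} (hu : u ≠ []) :
    continuant (u ++ u.reverse) = continuant u ^ 2 + continuant u.dropLast ^ 2 := by
  rw [continuant_append hu (List.reverse_ne_nil_iff.mpr hu), List.tail_reverse, continuant_reverse,
    continuant_reverse, sq, sq]

theorem det_continuantMatrix (l : List R) : (continuantMatrix l).det = (-1) ^ l.length := by
  induction l with
  | nil => simp
  | cons a l ih =>
    rw [continuantMatrix_cons, det_mul, ih, det_fin_two_of, List.length_cons, pow_succ']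
    ring

theorem continuant_mul_sub_mul_eq_neg_one_pow {l : List R} (hl : 2 ≤ l.length) :
    continuant l * continuant l.tail.dropLast - continuant l.dropLast * continuant l.tail =
      (-1) ^ l.length := by
  rw [← det_continuantMatrix, continuantMatrix_of_two_le_length hl, det_fin_two_of]

theorem continuant_dropLast_append_reverse_sq_add_one {u : List R} (hu : u ≠ []) :
    continuant (u ++ u.reverse).dropLast ^ 2 + 1 =
      continuant (u ++ u.reverse) * continuant (u ++ u.reverse).tail.dropLast := by
  have hlen : 2 ≤ (u ++ u.reverse).length := by
    have := List.length_pos_iff.mpr hu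
    rw [List.length_append, List.length_reverse]
    omega
  have hcassini := continuant_mul_sub_mul_eq_neg_one_pow hlen
  have htail : continuant (u ++ u.reverse).tail = continuant (u ++ u.reverse).dropLast := by
    conv_lhs => rw [← List.reverse_reverse u, ← List.reverse_append]
    rw [List.tail_reverse, List.reverse_reverse, continuant_reverse]
  rw [htail, List.length_append, List.length_reverse, ← two_mul, pow_mul,
    neg_one_sq, one_pow] at hcassini
  linear_combination -hcassini

end CommRing

/-- For a palindromic sequence `(q₁,…,qₙ)` of even length `n = 2s` in a commutative ring,
`[q₁,…,q_s,q_s,…,q₂]² + 1 = [q₁,…,q_s,q_s,…,q₁]·[q₂,…,q_s,q_s,…,q₂]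
  = ([q₁,…,q_s]² + [q₁,…,q_{s−1}]²)·([q₂,…,q_s]² + [q₂,…,q_{s−1}]²)`. -/
theorem continuant_palindromic {R : Type*} [CommRing R] (s : ℕ) (hs : 2 ≤ s)
    (q : Fin (2 * s) → R)
    (hpal : ∀ i : Fin (2 * s), q i = q ⟨2 * s - 1 - (i : ℕ), by have := i.isLt; omega⟩) :
    continuant ((List.ofFn q).dropLast) ^ 2 + 1 =
        continuant (List.ofFn q) * continuant (((List.ofFn q).tail).dropLast) ∧
      continuant (List.ofFn q) * continuant (((List.ofFn q).tail).dropLast) =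
        (continuant ((List.ofFn q).take s) ^ 2 +
            continuant ((List.ofFn q).take (s - 1)) ^ 2) *
          (continuant (((List.ofFn q).drop 1).take (s - 1)) ^ 2 +
            continuant (((List.ofFn q).drop 1).take (s - 2)) ^ 2) := by
  have hrev : (List.ofFn q).reverse = List.ofFn q :=
    List.reverse_ofFn_eq_self fun i =>
      (hpal i).trans (congrArg q (Fin.ext (by rw [Fin.val_rev, Fin.val_mk]; omega)))
  obtain ⟨w, rfl, hw⟩ : ∃ w : List R, w.length = s ∧ List.ofFn q = w ++ w.reverse :=
    ⟨(List.ofFn q).take s, by rw [List.length_take, List.length_ofFn]; omega,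
      List.eq_take_append_reverse_take hrev (List.length_ofFn)⟩
  have hw₀ : w ≠ [] := by rintro rfl; simp at hs
  have hw₁ : w.tail ≠ [] := by rw [← List.length_pos_iff, List.length_tail]; omega
  have htake : (w ++ w.reverse).take w.length = w := by simp
  have htake₁ : (w ++ w.reverse).take (w.length - 1) = w.dropLast := by
    rw [List.take_append_of_le_length (by omega), List.dropLast_eq_take]
  have hdrop : (w ++ w.reverse).drop 1 = w.tail ++ w.reverse := by
    rw [List.drop_one, List.tail_append_of_ne_nil hw₀]
  have htake₂ : (w.tail ++ w.reverse).take (w.length - 1) = w.tail := by simp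
  have htake₃ : (w.tail ++ w.reverse).take (w.length - 2) = w.tail.dropLast := by
    rw [List.take_append_of_le_length (by rw [List.length_tail]; omega), List.dropLast_eq_take,
      List.length_tail, Nat.sub_sub]
  rw [hw, htake, htake₁, hdrop, htake₂, htake₃]
  refine ⟨continuant_dropLast_append_reverse_sq_add_one hw₀, ?_⟩
  rw [List.tail_dropLast_append_reverse hw₀, continuant_append_reverse hw₀,
    continuant_append_reverse hw₁]
end

section
/- (Noncommutative Lewis-Carroll-like identity) Let R be a ring with an anti-automorphism τ ↦ τ̄ such that τ·τ̄ = τ̄·τ for every τ ∈ R, and such that every element τ with τ̄ = τ belongs to the centre of R. Let (q₁,…,qₙ) be a quasi-palindromic sequence in R of length n ≥ 2, i.e. q_i = conjugate(q_{n+1−i}) for 1 ≤ i ≤ n. Then [q₁,…,qₙ]·[q₂,…,q_{n−1}] = [q₂,…,qₙ]·[q₁,…,q_{n−1}] + (−1)ⁿ = [q₁,…,q_{n−1}]·[q₂,…,qₙ] + (−1)ⁿ. -/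
/-!
Write a quasi-palindrome of length `n ≥ 2` as `a :: (m ++ [σ a])` with `m` again
quasi-palindromic, and induct on `m`. Since `σ` reverses products, `σ [q₁,…,qₖ] = [σqₖ,…,σq₁]`,
so the continuant `A` of `m` is `σ`-fixed, hence central, and the two continuants `B, C` of `m`
with one end dropped satisfy `C = σ B`, hence commute. Expanding the continuants of the long
sequence at both ends expresses them through `A, B, C, D = [m with both ends dropped]`, and the
identity `A·D = C·B + (-1)ⁿ` for `m` lifts to the long sequence once `A` is moved past everything.
-/

def IsQuasiPalindrome {α : Type*} (σ : α → α) (l : List α) : Prop :=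
  l.map σ = l.reverse

lemma IsQuasiPalindrome.of_cons_append {α : Type*} {σ : α → α} {a x : α} {m : List α}
    (h : IsQuasiPalindrome σ (a :: (m ++ [x]))) : σ a = x ∧ IsQuasiPalindrome σ m := by
  simp only [IsQuasiPalindrome, List.map_cons, List.map_append, List.map_nil, List.reverse_cons,
    List.reverse_append, List.reverse_nil, List.nil_append, List.cons_append, List.cons.injEq,
    List.append_singleton_inj] at h
  exact ⟨h.1, h.2.1⟩

lemma List.exists_eq_cons_append_singleton {α : Type*} {l : List α} (h : 2 ≤ l.length) :
    ∃ a m x, l = a :: (m ++ [x]) := by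
  obtain ⟨a, t, rfl⟩ := List.exists_cons_of_length_pos (by omega : 0 < l.length)
  obtain ⟨m, x, rfl⟩ := (List.eq_nil_or_concat' t).resolve_left (by rintro rfl; simp at h)
  exact ⟨a, m, x, rfl⟩

section Continuant
variable {R : Type*} [Ring R]

lemma continuant_append_singleton {m : List R} (hm : m ≠ []) (x : R) :
    continuant (m ++ [x]) = continuant m * x + continuant m.dropLast := by
  obtain ⟨m, y, rfl⟩ := (List.eq_nil_or_concat' m).resolve_left hm
  simp [continuant, contAux]

lemma contAux_append_pair (l : List R) (b a : R) :
    contAux (l ++ [b, a]) = a * contAux (l ++ [b]) + contAux l := by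
  induction l using contAux.induct with
  | case1 => simp [contAux]
  | case2 c =>
    simp only [List.cons_append, List.nil_append, contAux]
    noncomm_ring
  | case3 c d l ih₁ ih₂ =>
    simp only [List.cons_append, contAux] at ih₁ ih₂ ⊢
    rw [ih₁, ih₂]
    noncomm_ring

lemma continuant_cons (a : R) {m : List R} (hm : m ≠ []) :
    continuant (a :: m) = a * continuant m + continuant m.tail := by
  obtain ⟨b, l, rfl⟩ := List.exists_cons_of_ne_nil hm
  simpa [continuant] using contAux_append_pair l.reverse b a

lemma apply_contAux {S : Type*} [Ring S] {f : R → S} (hone : f 1 = 1)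
    (hadd : ∀ a b, f (a + b) = f a + f b) (hmul : ∀ a b, f (a * b) = f b * f a)
    (l : List R) : f (contAux l) = continuant (l.map f) := by
  induction l using contAux.induct with
  | case1 => exact hone
  | case2 a => rfl
  | case3 a b l ih₁ ih₂ =>
    rw [contAux, hadd, hmul, ih₁, ih₂, List.map_cons (a := a),
      continuant_cons _ (by simp), List.map_cons, List.tail_cons]

lemma apply_continuant {S : Type*} [Ring S] {f : R → S} (hone : f 1 = 1)
    (hadd : ∀ a b, f (a + b) = f a + f b) (hmul : ∀ a b, f (a * b) = f b * f a)
    (l : List R) : f (continuant l) = continuant (l.map f).reverse := by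
  rw [continuant, apply_contAux hone hadd hmul, List.map_reverse]

lemma IsQuasiPalindrome.apply_continuant_eq {σ : R → R} (hone : σ 1 = 1)
    (hadd : ∀ a b, σ (a + b) = σ a + σ b) (hmul : ∀ a b, σ (a * b) = σ b * σ a)
    {l : List R} (hl : IsQuasiPalindrome σ l) : σ (continuant l) = continuant l := by
  rw [apply_continuant hone hadd hmul, hl, List.reverse_reverse]

lemma IsQuasiPalindrome.apply_continuant_cons {σ : R → R} (hone : σ 1 = 1)
    (hadd : ∀ a b, σ (a + b) = σ a + σ b) (hmul : ∀ a b, σ (a * b) = σ b * σ a)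
    {m : List R} (hm : IsQuasiPalindrome σ m) (b : R) :
    σ (continuant (b :: m)) = continuant (m ++ [σ b]) := by
  rw [apply_continuant hone hadd hmul, List.map_cons, List.reverse_cons, hm, List.reverse_reverse]

lemma IsQuasiPalindrome.continuant_cons_commute {σ : R → R} (hone : σ 1 = 1)
    (hadd : ∀ a b, σ (a + b) = σ a + σ b) (hmul : ∀ a b, σ (a * b) = σ b * σ a)
    (hcomm : ∀ a, a * σ a = σ a * a) {m : List R} (hm : IsQuasiPalindrome σ m) (b : R) :
    Commute (continuant (b :: m)) (continuant (m ++ [σ b])) := by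
  rw [← hm.apply_continuant_cons hone hadd hmul]
  exact hcomm _

lemma lewis_carroll_step {A B C D ε : R} (hA : ∀ y, A * y = y * A) (h : A * D = C * B + ε)
    (a x : R) : (a * (A * x + B) + (C * x + D)) * A = (a * A + C) * (A * x + B) + ε := by
  calc (a * (A * x + B) + (C * x + D)) * A
      = a * (A * (x * A)) + a * (B * A) + C * (x * A) + A * D := by rw [hA D]; noncomm_ring
    _ = a * (A * (A * x)) + a * (A * B) + C * (A * x) + (C * B + ε) := by
      rw [← hA x, ← hA B, h]
    _ = (a * A + C) * (A * x + B) + ε := by noncomm_ring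

theorem IsQuasiPalindrome.continuant_lewis_carroll {σ : R → R} (hone : σ 1 = 1)
    (hadd : ∀ a b, σ (a + b) = σ a + σ b) (hmul : ∀ a b, σ (a * b) = σ b * σ a)
    (hcomm : ∀ a, a * σ a = σ a * a) (hcentral : ∀ a, σ a = a → ∀ b, a * b = b * a)
    {m : List R} (hm : IsQuasiPalindrome σ m) (a : R) :
    continuant (a :: (m ++ [σ a])) * continuant m =
      continuant (a :: m) * continuant (m ++ [σ a]) + (-1) ^ m.length := by
  induction m using List.bidirectionalRec generalizing a with
  | nil => simp [continuant, contAux]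
  | singleton b =>
    have hb : σ b = b := by simpa [IsQuasiPalindrome] using hm
    rw [continuant_cons a (by simp)]
    -- the inductive step, with `0` as the continuant of `[b]` with both ends dropped
    simpa [continuant, contAux] using lewis_carroll_step (A := b) (B := 1) (C := 1) (D := 0)
      (ε := -1) (hcentral b hb) (by simp) a (σ a)
  | cons_append b m y ih =>
    obtain ⟨rfl, hm'⟩ := hm.of_cons_append
    have hIH := ih hm' b
    rw [(hm'.continuant_cons_commute hone hadd hmul hcomm b).eq] at hIH
    generalize hM : b :: (m ++ [σ b]) = M at hm hIH ⊢
    have hA : ∀ y, continuant M * y = y * continuant M :=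
      hcentral _ (hm.apply_continuant_eq hone hadd hmul)
    have hM_append : continuant (M ++ [σ a]) = continuant M * σ a + continuant (b :: m) := by
      subst hM
      rw [continuant_append_singleton (by simp), List.dropLast_cons_of_ne_nil (by simp),
        List.dropLast_concat]
    have hcons_append : continuant (a :: (M ++ [σ a])) =
        a * continuant (M ++ [σ a]) + (continuant (m ++ [σ b]) * σ a + continuant m) := by
      subst hM
      rw [continuant_cons a (by simp), List.cons_append, List.tail_cons,
        continuant_append_singleton (by simp), List.dropLast_concat]
    have hcons : continuant (a :: M) = a * continuant M + continuant (m ++ [σ b]) := by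
      subst hM
      rw [continuant_cons a (by simp), List.tail_cons]
    have hsign : (-1 : R) ^ M.length = (-1) ^ m.length := by simp [← hM, pow_add]
    rw [hcons_append, hM_append, hcons, hsign]
    exact lewis_carroll_step hA hIH a (σ a)

end Continuant

/-- **Noncommutative Lewis-Carroll-like identity.** Let `σ` be an anti-automorphism of a
ring `R` such that `τ·στ = στ·τ` for all `τ` and every `σ`-fixed element is central.
For a quasi-palindromic sequence `(q₁,…,qₙ)` (i.e. `qᵢ = σ q_{n+1−i}`) of length `n ≥ 2`,
`[q₁,…,qₙ]·[q₂,…,q_{n−1}] = [q₂,…,qₙ]·[q₁,…,q_{n−1}] + (−1)ⁿ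
  = [q₁,…,q_{n−1}]·[q₂,…,qₙ] + (−1)ⁿ`. -/
theorem continuant_quasi_palindromic {R : Type*} [Ring R] (σ : R → R)
    (hinv : ∀ a, σ (σ a) = a)
    (hadd : ∀ a b, σ (a + b) = σ a + σ b)
    (hmul : ∀ a b, σ (a * b) = σ b * σ a)
    (hcomm : ∀ a, a * σ a = σ a * a)
    (hcentral : ∀ a, σ a = a → ∀ b, a * b = b * a)
    (n : ℕ) (hn : 2 ≤ n) (q : Fin n → R)
    (hqp : ∀ i : Fin n, q i = σ (q ⟨n - 1 - (i : ℕ), by have := i.isLt; omega⟩)) :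
    continuant (List.ofFn q) * continuant (((List.ofFn q).tail).dropLast) =
        continuant ((List.ofFn q).tail) * continuant ((List.ofFn q).dropLast) + (-1) ^ n ∧
      continuant (List.ofFn q) * continuant (((List.ofFn q).tail).dropLast) =
        continuant ((List.ofFn q).dropLast) * continuant ((List.ofFn q).tail) + (-1) ^ n := by
  have hone : σ 1 = 1 := by simpa [hinv] using (hmul (σ 1) 1).symm
  have hq : IsQuasiPalindrome σ (List.ofFn q) := by
    refine List.ext_getElem (by simp) fun i hi _ => ?_
    simp only [List.getElem_map, List.getElem_reverse, List.getElem_ofFn, List.length_ofFn]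
    rw [hqp ⟨i, by simpa using hi⟩, hinv]
  obtain ⟨a, m, x, hamx⟩ :=
    List.exists_eq_cons_append_singleton (l := List.ofFn q) (by simpa using hn)
  have hlen : n = m.length + 2 := by simpa using congrArg List.length hamx
  rw [hamx] at hq ⊢
  obtain ⟨rfl, hm⟩ := hq.of_cons_append
  have key := hm.continuant_lewis_carroll hone hadd hmul hcomm hcentral a
  simp only [List.tail_cons, List.dropLast_cons_of_ne_nil (by simp : m ++ [σ a] ≠ []),
    List.dropLast_concat, hlen, pow_add, neg_one_sq, mul_one]
  exact ⟨by rw [key, (hm.continuant_cons_commute hone hadd hmul hcomm a).eq], key⟩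
end
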